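/- For every λ ∈ ℝ^T and every Markov deterministic optimal policy π^λ of the sub-MDP Q(λ), the vector (m − K·E^{π^λ}[A_t] : 1 ≤ t ≤ T) is a subgradient of P at λ: for all λ' ∈ ℝ^T, P(λ') ≥ P(λ) + ∑_{t=1}^T (m − K·E^{π^λ}[A_t])·(λ'_t − λ_t). -/

import Mathlib

open Finset

namespace RMAB

/-- Numeric value of an action: the active action `true` counts as `1`. -/
def actVal (a : Bool) : ℝ := if a then 1 else 0

section Core

variable {σ β : Type*} [Fintype σ] [Fintype β] [DecidableEq σ]

/-- A (randomized) Markov policy: `π s a t` is the probability of taking action `a`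
in state `s` at time `t`. -/
def IsPolicy (π : σ → β → ℕ → ℝ) : Prop :=
  (∀ s a t, 0 ≤ π s a t) ∧ ∀ s t, ∑ a : β, π s a t = 1

/-- A transition kernel: `P a s s'` is the probability of moving from `s` to `s'`
when action `a` is taken. -/
def IsKernel (P : β → σ → σ → ℝ) : Prop :=
  (∀ a s s', 0 ≤ P a s s') ∧ ∀ a s, ∑ s' : σ, P a s s' = 1

/-- `saDist P init π t s a` is the probability, under the Markov policy `π` started at
`init`, that at time `t` (1-indexed) the process is in state `s` and takes action `a`. -/
noncomputable def saDist (P : β → σ → σ → ℝ) (init : σ) (π : σ → β → ℕ → ℝ) :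
    ℕ → σ → β → ℝ
  | 0 => fun _ _ => 0
  | 1 => fun s a => (if s = init then (1 : ℝ) else 0) * π s a 1
  | (t + 2) => fun s a =>
      (∑ s' : σ, ∑ a' : β, saDist P init π (t + 1) s' a' * P a' s' s) * π s a (t + 2)

/-- Expected value of `∑_{t=1}^T f t S_t A_t` under the Markov policy `π` started at `init`. -/
noncomputable def expVal (P : β → σ → σ → ℝ) (init : σ) (π : σ → β → ℕ → ℝ)
    (T : ℕ) (f : ℕ → σ → β → ℝ) : ℝ :=
  ∑ t ∈ Finset.Icc 1 T, ∑ s : σ, ∑ a : β, saDist P init π t s a * f t s a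

end Core

section Sub

variable {S : Type*} [Fintype S] [DecidableEq S]

/-- Value of a policy in the sub-MDP with Lagrange penalty `lam t` for the active action. -/
noncomputable def subValue (P : Bool → S → S → ℝ) (s1 : S) (r : ℕ → S → Bool → ℝ)
    (lam : ℕ → ℝ) (T : ℕ) (π : S → Bool → ℕ → ℝ) : ℝ :=
  expVal P s1 π T fun t s a => r t s a - lam t * actVal a

/-- `Q(λ)`: the optimal value of the penalized sub-MDP. -/
noncomputable def Qval (P : Bool → S → S → ℝ) (s1 : S) (r : ℕ → S → Bool → ℝ)
    (T : ℕ) (lam : ℕ → ℝ) : ℝ :=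
  sSup {v | ∃ π : S → Bool → ℕ → ℝ, IsPolicy π ∧ v = subValue P s1 r lam T π}

/-- The transition kernel of the original MDP: `K` arms evolving independently. -/
def jointKernel (P : Bool → S → S → ℝ) (K : ℕ) :
    (Fin K → Bool) → (Fin K → S) → (Fin K → S) → ℝ :=
  fun a s s' => ∏ x, P (a x) (s x) (s' x)

/-- The reward of the original MDP: the sum of the arms' rewards. -/
def jointReward (r : ℕ → S → Bool → ℝ) (K : ℕ) :
    ℕ → (Fin K → S) → (Fin K → Bool) → ℝ :=
  fun t s a => ∑ x, r t (s x) (a x)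

/-- `|a|`: the number of active arms of a joint action. -/
def numActive {K : ℕ} (a : Fin K → Bool) : ℝ := ∑ x, actVal (a x)

/-- Expected total reward of a joint Markov policy in the original MDP with `K` arms,
all started at `s1`. -/
noncomputable def jointValue (P : Bool → S → S → ℝ) (s1 : S) (r : ℕ → S → Bool → ℝ)
    (T K : ℕ) (πb : (Fin K → S) → (Fin K → Bool) → ℕ → ℝ) : ℝ :=
  expVal (jointKernel P K) (fun _ => s1) πb T (jointReward r K)

/-- The Lagrangian relaxation value `P(λ)`: the supremum over all joint Markov policies of
the expected total reward minus the penalty `∑_t λ_t (|A_t| − m)`. -/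
noncomputable def lagrangeValue (P : Bool → S → S → ℝ) (s1 : S) (r : ℕ → S → Bool → ℝ)
    (T K m : ℕ) (lam : ℕ → ℝ) : ℝ :=
  sSup {v | ∃ πb : (Fin K → S) → (Fin K → Bool) → ℕ → ℝ, IsPolicy πb ∧
    v = expVal (jointKernel P K) (fun _ => s1) πb T
      (fun t s a => jointReward r K t s a - lam t * (numActive a - (m : ℝ)))}

/-- A joint Markov policy is feasible if it activates exactly `m` arms in every period
with probability one. -/
def Feasible (P : Bool → S → S → ℝ) (s1 : S) (T K m : ℕ)
    (πb : (Fin K → S) → (Fin K → Bool) → ℕ → ℝ) : Prop :=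
  IsPolicy πb ∧ ∀ t ∈ Finset.Icc 1 T, ∀ s a, numActive a ≠ (m : ℝ) →
    saDist (jointKernel P K) (fun _ => s1) πb t s a = 0

end Sub

end RMAB
namespace RMAB

section Index

variable {S : Type*} [Fintype S] [DecidableEq S]

/-- The deterministic Markov policy corresponding to a decision rule `d`. -/
def detPolicy (d : S → ℕ → Bool) : S → Bool → ℕ → ℝ :=
  fun s a t => if a = d s t then 1 else 0

/-- `d` is a Markov deterministic optimal policy of the sub-MDP `Q(lam)`. -/
def IsOptDet (P : Bool → S → S → ℝ) (s1 : S) (r : ℕ → S → Bool → ℝ)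
    (T : ℕ) (lam : ℕ → ℝ) (d : S → ℕ → Bool) : Prop :=
  subValue P s1 r lam T (detPolicy d) = Qval P s1 r T lam

/-- The index `β_t(s)`: the supremum of those `β` such that some Markov deterministic
optimal policy of the sub-MDP `Q(λ*[β,t])` takes the active action in state `s` at time `t`,
where `λ*[β,t]` is `λ*` with its `t`-th coordinate replaced by `β`. -/
noncomputable def indexβ (P : Bool → S → S → ℝ) (s1 : S) (r : ℕ → S → Bool → ℝ)
    (T : ℕ) (lamstar : ℕ → ℝ) (t : ℕ) (s : S) : ℝ :=
  sSup {b : ℝ | ∃ d : S → ℕ → Bool,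
    IsOptDet P s1 r T (Function.update lamstar t b) d ∧ d s t = true}

end Index

end RMAB

namespace RMAB

/-! The penalty `λ_t (|A_t| - m)` splits over the arms, so the Lagrangian value of a joint policy
is `m ∑ λ_t` plus, for each arm, the penalized sub-MDP value of that arm's marginal state-action
distribution. Since the joint kernel is a product, each marginal satisfies the flow-balance
equations of the sub-MDP and is therefore realized by a Markov policy of the sub-MDP; this gives
`P(λ) ≤ K Q(λ) + m ∑ λ_t`. Conversely, running `π^λ` on every arm shows
`P(λ') ≥ K V(π^λ, λ') + m ∑ λ'_t`, and the right side is affine in `λ'` with slope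
`m - K E^{π^λ}[A_t]` and equals `K Q(λ) + m ∑ λ_t` at `λ' = λ`. -/

section Occupation

variable {σ β : Type*} [Fintype σ] [Fintype β] [DecidableEq σ]
  {P : β → σ → σ → ℝ} {init : σ} {π : σ → β → ℕ → ℝ}

def inflow (P : β → σ → σ → ℝ) (ν : σ → β → ℝ) (s : σ) : ℝ :=
  ∑ s', ∑ a', ν s' a' * P a' s' s

omit [DecidableEq σ] in
lemma sum_inflow (hP : IsKernel P) (ν : σ → β → ℝ) :
    ∑ s, inflow P ν s = ∑ s, ∑ a, ν s a := by
  simp only [inflow]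
  rw [sum_comm]
  refine sum_congr rfl fun s _ => ?_
  rw [sum_comm]
  simp only [← mul_sum, hP.2, mul_one]

lemma saDist_one (P : β → σ → σ → ℝ) (init : σ) (π : σ → β → ℕ → ℝ) (s : σ) (a : β) :
    saDist P init π 1 s a = (if s = init then 1 else 0) * π s a 1 := rfl

lemma saDist_add_two (P : β → σ → σ → ℝ) (init : σ) (π : σ → β → ℕ → ℝ) (t : ℕ) (s : σ)
    (a : β) : saDist P init π (t + 2) s a = inflow P (saDist P init π (t + 1)) s * π s a (t + 2) :=
  rfl

theorem saDist_nonneg (hP : IsKernel P) (hπ : IsPolicy π) :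
    ∀ t s a, 0 ≤ saDist P init π t s a
  | 0, _, _ => le_rfl
  | 1, s, a => mul_nonneg (by positivity) (hπ.1 s a 1)
  | t + 2, s, a => mul_nonneg (sum_nonneg fun s' _ => sum_nonneg fun a' _ =>
      mul_nonneg (saDist_nonneg hP hπ (t + 1) s' a') (hP.1 a' s' s)) (hπ.1 s a _)

theorem sum_saDist (hP : IsKernel P) (hπ : IsPolicy π) :
    ∀ t, 1 ≤ t → ∑ s, ∑ a, saDist P init π t s a = 1
  | 1, _ => by simp [saDist_one, hπ.2]
  | t + 2, _ => by
    simp only [saDist_add_two, ← mul_sum, hπ.2, mul_one, sum_inflow hP]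
    exact sum_saDist hP hπ (t + 1) (by omega)

lemma sum_saDist_mul (hP : IsKernel P) (hπ : IsPolicy π) {t : ℕ} (ht : 1 ≤ t) (c : ℝ) :
    ∑ s, ∑ a, saDist P init π t s a * c = c := by
  simp only [← sum_mul, sum_saDist hP hπ t ht, one_mul]

lemma expVal_add (f g : ℕ → σ → β → ℝ) (T : ℕ) :
    expVal P init π T (fun t s a => f t s a + g t s a)
      = expVal P init π T f + expVal P init π T g := by
  simp only [expVal, mul_add, sum_add_distrib]

lemma expVal_sum {ι : Type*} (I : Finset ι) (f : ι → ℕ → σ → β → ℝ) (T : ℕ) :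
    expVal P init π T (fun t s a => ∑ i ∈ I, f i t s a) = ∑ i ∈ I, expVal P init π T (f i) := by
  induction I using Finset.cons_induction with
  | empty => simp [expVal]
  | cons i I hi ih => simp only [sum_cons, expVal_add, ih]

lemma expVal_const (hP : IsKernel P) (hπ : IsPolicy π) (T : ℕ) (c : ℕ → ℝ) :
    expVal P init π T (fun t _ _ => c t) = ∑ t ∈ Icc 1 T, c t :=
  sum_congr rfl fun t ht => sum_saDist_mul hP hπ (mem_Icc.1 ht).1 (c t)

lemma expVal_le_sum_abs (hP : IsKernel P) (hπ : IsPolicy π) (T : ℕ) (f : ℕ → σ → β → ℝ) :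
    expVal P init π T f ≤ ∑ t ∈ Icc 1 T, ∑ s, ∑ a, |f t s a| := by
  refine sum_le_sum fun t ht => ?_
  set M := ∑ s, ∑ a, |f t s a|
  have hf : ∀ s a, f t s a ≤ M := fun s a =>
    (le_abs_self _).trans <| (single_le_sum (f := fun a => |f t s a|) (fun _ _ => abs_nonneg _)
      (mem_univ a)).trans <| single_le_sum (f := fun s => ∑ a, |f t s a|)
        (fun _ _ => sum_nonneg fun _ _ => abs_nonneg _) (mem_univ s)
  calc ∑ s, ∑ a, saDist P init π t s a * f t s a
      ≤ ∑ s, ∑ a, saDist P init π t s a * M := by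
        gcongr with s _ a _
        · exact saDist_nonneg hP hπ t s a
        · exact hf s a
    _ = M := sum_saDist_mul hP hπ (mem_Icc.1 ht).1 M

/-- The flow-balance equations of the linear-programming formulation of an MDP. -/
def IsOccupation (P : β → σ → σ → ℝ) (init : σ) (μ : ℕ → σ → β → ℝ) : Prop :=
  (∀ t s a, 0 ≤ μ t s a) ∧ (∀ s, ∑ a, μ 1 s a = if s = init then 1 else 0) ∧
    ∀ t s, ∑ a, μ (t + 2) s a = inflow P (μ (t + 1)) s

/-- States carrying no mass get the uniform action distribution; any choice would do. -/
noncomputable def occupationPolicy (μ : ℕ → σ → β → ℝ) : σ → β → ℕ → ℝ :=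
  fun s a t => if ∑ a', μ t s a' = 0 then (Fintype.card β : ℝ)⁻¹ else μ t s a / ∑ a', μ t s a'

omit [Fintype σ] [DecidableEq σ] in
lemma occupationPolicy_isPolicy [Nonempty β] {μ : ℕ → σ → β → ℝ} (hμ : ∀ t s a, 0 ≤ μ t s a) :
    IsPolicy (occupationPolicy μ) := by
  refine ⟨fun s a t => ?_, fun s t => ?_⟩
  · unfold occupationPolicy
    split_ifs
    · positivity
    · exact div_nonneg (hμ t s a) (sum_nonneg fun a' _ => hμ t s a')
  · by_cases h : ∑ a', μ t s a' = 0
    · simp [occupationPolicy, h]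
    · simp only [occupationPolicy, h, if_false, ← sum_div, div_self h]

omit [Fintype σ] [DecidableEq σ] in
lemma sum_mul_occupationPolicy {μ : ℕ → σ → β → ℝ} (hμ : ∀ t s a, 0 ≤ μ t s a) (t : ℕ) (s : σ)
    (a : β) : (∑ a', μ t s a') * occupationPolicy μ s a t = μ t s a := by
  by_cases h : ∑ a', μ t s a' = 0
  · rw [h, zero_mul, (sum_eq_zero_iff_of_nonneg fun a' _ => hμ t s a').1 h a (mem_univ a)]
  · rw [occupationPolicy, if_neg h, mul_div_cancel₀ _ h]

theorem saDist_occupationPolicy {μ : ℕ → σ → β → ℝ} (hμ : IsOccupation P init μ) :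
    ∀ t, 1 ≤ t → saDist P init (occupationPolicy μ) t = μ t
  | 1, _ => funext fun s => funext fun a => by
    rw [saDist_one, ← hμ.2.1 s, sum_mul_occupationPolicy hμ.1]
  | t + 2, _ => funext fun s => funext fun a => by
    rw [saDist_add_two, saDist_occupationPolicy hμ (t + 1) (by omega), ← hμ.2.2,
      sum_mul_occupationPolicy hμ.1]

end Occupation

section Lumping

variable {σ β τ γ : Type*} [Fintype σ] [Fintype β] [Fintype τ] [Fintype γ]
  [DecidableEq τ] [DecidableEq γ]
  {P : β → σ → σ → ℝ} {P' : γ → τ → τ → ℝ} {init : σ} {π : σ → β → ℕ → ℝ}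
  {φ : σ → τ} {ψ : β → γ}

def marginal (φ : σ → τ) (ψ : β → γ) (ν : σ → β → ℝ) (u : τ) (c : γ) : ℝ :=
  ∑ s with φ s = u, ∑ a with ψ a = c, ν s a

def IsLumpable (φ : σ → τ) (ψ : β → γ) (P : β → σ → σ → ℝ) (P' : γ → τ → τ → ℝ) : Prop :=
  ∀ a s u, ∑ s' with φ s' = u, P a s s' = P' (ψ a) (φ s) u

lemma sum_marginal_mul (ν : σ → β → ℝ) (F : τ → γ → ℝ) :
    ∑ u, ∑ c, marginal φ ψ ν u c * F u c = ∑ s, ∑ a, ν s a * F (φ s) (ψ a) := by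
  calc ∑ u, ∑ c, marginal φ ψ ν u c * F u c
      = ∑ u, ∑ s with φ s = u, ∑ c, ∑ a with ψ a = c, ν s a * F (φ s) (ψ a) := by
        simp only [marginal, sum_mul]
        refine sum_congr rfl fun u _ => ?_
        rw [sum_comm]
        refine sum_congr rfl fun s hs => sum_congr rfl fun c _ => sum_congr rfl fun a ha => ?_
        rw [(mem_filter.1 hs).2, (mem_filter.1 ha).2]
    _ = ∑ s, ∑ a, ν s a * F (φ s) (ψ a) := by
        rw [sum_fiberwise]
        exact sum_congr rfl fun s _ => sum_fiberwise _ _ _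

omit [Fintype τ] in
lemma sum_marginal (ν : σ → β → ℝ) (u : τ) :
    ∑ c, marginal φ ψ ν u c = ∑ s with φ s = u, ∑ a, ν s a := by
  simp only [marginal]
  rw [sum_comm]
  exact sum_congr rfl fun s _ => sum_fiberwise _ _ _

lemma sum_fiber_inflow (h : IsLumpable φ ψ P P') (ν : σ → β → ℝ) (u : τ) :
    ∑ s with φ s = u, inflow P ν s = inflow P' (marginal φ ψ ν) u := by
  simp only [inflow, sum_marginal_mul, ← h _ _ u, mul_sum]
  rw [sum_comm]
  exact sum_congr rfl fun s' _ => sum_comm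

theorem isOccupation_marginal [DecidableEq σ] (hP : IsKernel P) (hπ : IsPolicy π)
    (h : IsLumpable φ ψ P P') :
    IsOccupation P' (φ init) fun t => marginal φ ψ (saDist P init π t) := by
  refine ⟨fun t u c => sum_nonneg fun s _ => sum_nonneg fun a _ => saDist_nonneg hP hπ t s a,
    fun u => ?_, fun t u => ?_⟩
  · rw [sum_marginal]
    simp [saDist_one, hπ.2, eq_comm (a := u)]
  · rw [sum_marginal, ← sum_fiber_inflow h]
    simp only [saDist_add_two, ← mul_sum, hπ.2, mul_one]

theorem marginal_saDist_of_lumpable [DecidableEq σ] (h : IsLumpable φ ψ P P')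
    {π' : τ → γ → ℕ → ℝ} (hπ : ∀ s c t, ∑ a with ψ a = c, π s a t = π' (φ s) c t) :
    ∀ t, 1 ≤ t → marginal φ ψ (saDist P init π t) = saDist P' (φ init) π' t
  | 1, _ => funext fun u => funext fun c => by
    simp only [marginal, saDist_one, ← mul_sum, hπ]
    by_cases hu : u = φ init
    · subst hu
      simp
    · simp [hu, Ne.symm hu]
  | t + 2, _ => funext fun u => funext fun c => by
    simp only [marginal, saDist_add_two, ← mul_sum, hπ]
    rw [sum_congr rfl fun s hs => by rw [(mem_filter.1 hs).2], ← sum_mul, sum_fiber_inflow h,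
      marginal_saDist_of_lumpable h hπ (t + 1) (by omega)]

theorem expVal_comp_eq_of_marginal [DecidableEq σ] {P' : γ → τ → τ → ℝ} {init' : τ}
    {π' : τ → γ → ℕ → ℝ}
    (h : ∀ t, 1 ≤ t → marginal φ ψ (saDist P init π t) = saDist P' init' π' t)
    (T : ℕ) (f : ℕ → τ → γ → ℝ) :
    expVal P init π T (fun t s a => f t (φ s) (ψ a)) = expVal P' init' π' T f :=
  sum_congr rfl fun t ht => by rw [← h t (mem_Icc.1 ht).1, sum_marginal_mul]

theorem exists_policy_expVal_comp_eq [DecidableEq σ] [Nonempty γ] (hP : IsKernel P)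
    (hπ : IsPolicy π) (h : IsLumpable φ ψ P P') :
    ∃ π' : τ → γ → ℕ → ℝ, IsPolicy π' ∧ ∀ T f,
      expVal P init π T (fun t s a => f t (φ s) (ψ a)) = expVal P' (φ init) π' T f := by
  have hμ := isOccupation_marginal (init := init) hP hπ h
  exact ⟨occupationPolicy _, occupationPolicy_isPolicy hμ.1,
    expVal_comp_eq_of_marginal fun t ht => (saDist_occupationPolicy hμ t ht).symm⟩

end Lumping

lemma sum_filter_eval_prod {ι κ R : Type*} [Fintype ι] [DecidableEq ι] [Fintype κ]
    [DecidableEq κ] [CommSemiring R] (μ : ι → κ → R) (hμ : ∀ i, ∑ c, μ i c = 1) (x : ι)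
    (u : κ) : ∑ g : ι → κ with g x = u, ∏ i, μ i (g i) = μ x u := by
  have hfilter : ({g : ι → κ | g x = u} : Finset (ι → κ))
      = Fintype.piFinset fun i => if i = x then {u} else univ := by
    ext g
    simp only [mem_filter, mem_univ, true_and, Fintype.mem_piFinset]
    refine ⟨fun hg i => ?_, fun hg => by simpa using hg x⟩
    split_ifs with hi
    · simp [hi, hg]
    · exact mem_univ _
  rw [hfilter, ← prod_univ_sum, Fintype.prod_eq_single x fun i hi => by simp [hi, hμ]]
  simp

section Product

variable {ι σ β : Type*} [Fintype ι] [DecidableEq ι] [Fintype β] {π : σ → β → ℕ → ℝ}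

def productPolicy (π : σ → β → ℕ → ℝ) : (ι → σ) → (ι → β) → ℕ → ℝ :=
  fun s a t => ∏ i, π (s i) (a i) t

lemma productPolicy_isPolicy (hπ : IsPolicy π) : IsPolicy (productPolicy (ι := ι) π) :=
  ⟨fun s a t => prod_nonneg fun _ _ => hπ.1 _ _ _, fun s t => by
    simp only [productPolicy]
    rw [← Fintype.prod_sum fun i c => π (s i) c t]
    simp only [hπ.2, prod_const_one]⟩

lemma sum_filter_productPolicy [DecidableEq β] (hπ : IsPolicy π) (x : ι) (s : ι → σ) (c : β)
    (t : ℕ) : ∑ a with a x = c, productPolicy π s a t = π (s x) c t :=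
  sum_filter_eval_prod (fun i c => π (s i) c t) (fun _ => hπ.2 _ _) x c

end Product

section Arms

variable {S : Type*} [Fintype S] [DecidableEq S] {K : ℕ} {P : Bool → S → S → ℝ}
  {π : S → Bool → ℕ → ℝ}

omit [DecidableEq S] in
lemma jointKernel_isKernel (hP : IsKernel P) (K : ℕ) : IsKernel (jointKernel P K) :=
  ⟨fun a s s' => prod_nonneg fun _ _ => hP.1 _ _ _, fun a s => by
    simp only [jointKernel, ← Fintype.prod_sum, hP.2, prod_const_one]⟩

lemma isLumpable_jointKernel (hP : IsKernel P) (x : Fin K) :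
    IsLumpable (fun s => s x) (fun a => a x) (jointKernel P K) P :=
  fun a s u => sum_filter_eval_prod (fun y c => P (a y) (s y) c) (fun _ => hP.2 _ _) x u

omit [Fintype S] [DecidableEq S] in
lemma detPolicy_isPolicy (d : S → ℕ → Bool) : IsPolicy (detPolicy d) :=
  ⟨fun s a t => by unfold detPolicy; positivity, fun s t => by simp [detPolicy]⟩

lemma subValue_le_Qval (hP : IsKernel P) (s1 : S) (r : ℕ → S → Bool → ℝ) (lam : ℕ → ℝ) (T : ℕ)
    (hπ : IsPolicy π) : subValue P s1 r lam T π ≤ Qval P s1 r T lam :=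
  le_csSup ⟨∑ t ∈ Icc 1 T, ∑ s, ∑ a, |r t s a - lam t * actVal a|, by
    rintro _ ⟨π', hπ', rfl⟩
    exact expVal_le_sum_abs hP hπ' _ _⟩ ⟨π, hπ, rfl⟩

lemma subValue_sub_subValue (P : Bool → S → S → ℝ) (s1 : S) (r : ℕ → S → Bool → ℝ)
    (lam lam' : ℕ → ℝ) (T : ℕ) (π : S → Bool → ℕ → ℝ) :
    subValue P s1 r lam T π - subValue P s1 r lam' T π
      = ∑ t ∈ Icc 1 T, (lam' t - lam t) * ∑ s, saDist P s1 π t s true := by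
  simp only [subValue, expVal, ← sum_sub_distrib, mul_sum]
  refine sum_congr rfl fun t _ => sum_congr rfl fun s _ => ?_
  simp only [Fintype.sum_bool, actVal, if_true, Bool.false_eq_true, if_false]
  ring

lemma expVal_lagrangian_eq_sum (hP : IsKernel P) {πb : (Fin K → S) → (Fin K → Bool) → ℕ → ℝ}
    (hπb : IsPolicy πb) (s1 : S) (r : ℕ → S → Bool → ℝ) (lam : ℕ → ℝ) (T m : ℕ) :
    expVal (jointKernel P K) (fun _ => s1) πb T
        (fun t s a => jointReward r K t s a - lam t * (numActive a - (m : ℝ)))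
      = ∑ x, expVal (jointKernel P K) (fun _ => s1) πb T
          (fun t s a => r t (s x) (a x) - lam t * actVal (a x))
        + ∑ t ∈ Icc 1 T, lam t * m := by
  have hsplit : (fun t s a => jointReward r K t s a - lam t * (numActive a - (m : ℝ)))
      = fun t s a => (∑ x, (r t (s x) (a x) - lam t * actVal (a x))) + lam t * m := by
    funext t s a
    simp only [jointReward, numActive, sum_sub_distrib, ← mul_sum]
    ring
  rw [hsplit, expVal_add, expVal_sum, expVal_const (jointKernel_isKernel hP K) hπb]

lemma expVal_lagrangian_le (hP : IsKernel P) {πb : (Fin K → S) → (Fin K → Bool) → ℕ → ℝ}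
    (hπb : IsPolicy πb) (s1 : S) (r : ℕ → S → Bool → ℝ) (lam : ℕ → ℝ) (T m : ℕ) :
    expVal (jointKernel P K) (fun _ => s1) πb T
        (fun t s a => jointReward r K t s a - lam t * (numActive a - (m : ℝ)))
      ≤ K * Qval P s1 r T lam + ∑ t ∈ Icc 1 T, lam t * m := by
  rw [expVal_lagrangian_eq_sum hP hπb]
  gcongr
  calc _ ≤ ∑ _x : Fin K, Qval P s1 r T lam := sum_le_sum fun x _ => ?_
    _ = K * Qval P s1 r T lam := by simp
  obtain ⟨π', hπ', hval⟩ :=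
    exists_policy_expVal_comp_eq (init := fun _ => s1) (jointKernel_isKernel hP K) hπb
      (isLumpable_jointKernel hP x)
  exact (hval T fun t s a => r t s a - lam t * actVal a).trans_le
    (subValue_le_Qval hP s1 r lam T hπ')

lemma expVal_lagrangian_productPolicy (hP : IsKernel P) (hπ : IsPolicy π) (s1 : S)
    (r : ℕ → S → Bool → ℝ) (lam : ℕ → ℝ) (T m : ℕ) :
    expVal (jointKernel P K) (fun _ => s1) (productPolicy π) T
        (fun t s a => jointReward r K t s a - lam t * (numActive a - (m : ℝ)))
      = K * subValue P s1 r lam T π + ∑ t ∈ Icc 1 T, lam t * m := by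
  rw [expVal_lagrangian_eq_sum hP (productPolicy_isPolicy hπ)]
  congr 1
  rw [sum_congr rfl fun x _ => expVal_comp_eq_of_marginal
    (marginal_saDist_of_lumpable (isLumpable_jointKernel hP x) (sum_filter_productPolicy hπ x)) T
    fun t s a => r t s a - lam t * actVal a]
  simp [subValue]

lemma lagrangeValue_le (hP : IsKernel P) (s1 : S) (r : ℕ → S → Bool → ℝ) (T K m : ℕ)
    (lam : ℕ → ℝ) :
    lagrangeValue P s1 r T K m lam ≤ K * Qval P s1 r T lam + ∑ t ∈ Icc 1 T, lam t * m :=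
  csSup_le ⟨_, _, productPolicy_isPolicy (detPolicy_isPolicy fun _ _ => true), rfl⟩ <| by
    rintro _ ⟨πb, hπb, rfl⟩
    exact expVal_lagrangian_le hP hπb s1 r lam T m

lemma le_lagrangeValue (hP : IsKernel P) (hπ : IsPolicy π) (s1 : S) (r : ℕ → S → Bool → ℝ)
    (T K m : ℕ) (lam : ℕ → ℝ) :
    K * subValue P s1 r lam T π + ∑ t ∈ Icc 1 T, lam t * m ≤ lagrangeValue P s1 r T K m lam :=
  le_csSup ⟨_, by
      rintro _ ⟨πb, hπb, rfl⟩
      exact expVal_lagrangian_le hP hπb s1 r lam T m⟩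
    ⟨productPolicy π, productPolicy_isPolicy hπ,
      (expVal_lagrangian_productPolicy hP hπ s1 r lam T m).symm⟩

end Arms

theorem subgradient_of_lagrangeValue_general
    {S : Type*} [Fintype S] [DecidableEq S]
    (T K m : ℕ)
    (P : Bool → S → S → ℝ) (hP : IsKernel P) (s1 : S)
    (r : ℕ → S → Bool → ℝ)
    (lam : ℕ → ℝ) (d : S → ℕ → Bool)
    (hopt : IsOptDet P s1 r T lam d) :
    ∀ lam' : ℕ → ℝ,
      lagrangeValue P s1 r T K m lam
          + ∑ t ∈ Finset.Icc 1 T,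
              ((m : ℝ) - (K : ℝ) * ∑ s : S, saDist P s1 (detPolicy d) t s true)
                * (lam' t - lam t)
        ≤ lagrangeValue P s1 r T K m lam' := by
  intro lam'
  set E : ℕ → ℝ := fun t => ∑ s, saDist P s1 (detPolicy d) t s true
  have hupper : lagrangeValue P s1 r T K m lam
      ≤ K * subValue P s1 r lam T (detPolicy d) + ∑ t ∈ Icc 1 T, lam t * m :=
    hopt ▸ lagrangeValue_le hP s1 r T K m lam
  have hsum : ∑ t ∈ Icc 1 T, lam t * m + ∑ t ∈ Icc 1 T, ((m : ℝ) - K * E t) * (lam' t - lam t)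
      = ∑ t ∈ Icc 1 T, lam' t * m - K * ∑ t ∈ Icc 1 T, (lam' t - lam t) * E t := by
    rw [mul_sum, ← sum_add_distrib, ← sum_sub_distrib]
    exact sum_congr rfl fun t _ => by ring
  calc _ ≤ K * subValue P s1 r lam T (detPolicy d) + ∑ t ∈ Icc 1 T, lam t * m
          + ∑ t ∈ Icc 1 T, ((m : ℝ) - K * E t) * (lam' t - lam t) := by gcongr
    _ = K * subValue P s1 r lam' T (detPolicy d) + ∑ t ∈ Icc 1 T, lam' t * m := by
      rw [add_assoc, hsum, ← subValue_sub_subValue]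
      ring
    _ ≤ lagrangeValue P s1 r T K m lam' :=
      le_lagrangeValue hP (detPolicy_isPolicy d) s1 r T K m lam'

/-- For every `λ ∈ ℝ^T` and every Markov deterministic optimal policy `π^λ`
of the sub-MDP `Q(λ)`, the vector `(m − K·E^{π^λ}[A_t])_{1 ≤ t ≤ T}` is a subgradient of
`P` at `λ`: for all `λ'`, `P(λ') ≥ P(λ) + ∑_t (m − K·E^{π^λ}[A_t])·(λ'_t − λ_t)`. -/
theorem subgradient_of_lagrangeValue
    {S : Type*} [Fintype S] [DecidableEq S]
    (T K m : ℕ) (hm : m ≤ K)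
    (P : Bool → S → S → ℝ) (hP : IsKernel P) (s1 : S)
    (r : ℕ → S → Bool → ℝ) (hr : ∀ t s a, 0 ≤ r t s a)
    (lam : ℕ → ℝ) (d : S → ℕ → Bool)
    (hopt : IsOptDet P s1 r T lam d) :
    ∀ lam' : ℕ → ℝ,
      lagrangeValue P s1 r T K m lam
          + ∑ t ∈ Finset.Icc 1 T,
              ((m : ℝ) - (K : ℝ) * ∑ s : S, saDist P s1 (detPolicy d) t s true)
                * (lam' t - lam t)
        ≤ lagrangeValue P s1 r T K m lam' :=
  subgradient_of_lagrangeValue_general T K m P hP s1 r lam d hopt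

end RMAB
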